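/- arXiv:2401.06636 — 3 statements merged into one kernel-verified Lean document; each statement's English description precedes it below -/
import Mathlib

section
/- For arbitrary elements (a₀,b₀) and (a₁,b₁) of B_{[0,∞)} there exists (c,d) ∈ B_{[0,∞)} such that (a₀,b₀)·(c,d) ≼ (a₁,b₁), and moreover (a₀,b₀)·(x,y) ≼ (a₁,b₁) for every (x,y) ∈ B_{[0,∞)} with (x,y) ≼ (c,d). Dually, there exists (c′,d′) ∈ B_{[0,∞)} such that (c′,d′)·(a₀,b₀) ≼ (a₁,b₁), and moreover (x,y)·(a₀,b₀) ≼ (a₁,b₁) for every (x,y) ≼ (c′,d′). -/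
/-- The underlying set of the semigroup `B_{[0,∞)}`: pairs of non-negative reals. -/
abbrev Bsg := {p : ℝ × ℝ // 0 ≤ p.1 ∧ 0 ≤ p.2}

namespace Bsg

/-- The multiplication `(a,b)·(c,d) = (a+c−min b c, b+d−min b c)`. -/
def bmul (u v : Bsg) : Bsg :=
  ⟨(u.1.1 + v.1.1 - min u.1.2 v.1.1, u.1.2 + v.1.2 - min u.1.2 v.1.1),
    by
      refine ⟨?_, ?_⟩
      · show (0:ℝ) ≤ u.1.1 + v.1.1 - min u.1.2 v.1.1
        have h := min_le_right u.1.2 v.1.1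
        have h1 := u.2.1; have h2 := v.2.1; linarith
      · show (0:ℝ) ≤ u.1.2 + v.1.2 - min u.1.2 v.1.1
        have h := min_le_left u.1.2 v.1.1
        have h1 := u.2.2; have h2 := v.2.2; linarith⟩

instance : Semigroup Bsg where
  mul := bmul
  mul_assoc := by
    rintro ⟨⟨a,b⟩,ha,hb⟩ ⟨⟨c,d⟩,hc,hd⟩ ⟨⟨e,g⟩,he,hg⟩
    show bmul (bmul _ _) _ = bmul _ (bmul _ _)
    apply Subtype.ext
    rw [Prod.ext_iff]
    constructor <;>
      simp only [bmul, min_def] <;> split_ifs <;> simp_all <;> linarith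

/-- The natural partial order on the inverse semigroup `B_{[0,∞)}`:
`s ≼ t` iff `s = t·e` for some idempotent `e`. -/
def ple (s t : Bsg) : Prop := ∃ e : Bsg, e * e = e ∧ s = t * e

/-- `L_α^+ = {(x, x+α) : x ≥ 0}`. -/
def Lplus (α : ℝ) : Set Bsg := {p | p.1.2 = p.1.1 + α}

/-- `L_α^− = {(x+α, x) : x ≥ 0}`. -/
def Lminus (α : ℝ) : Set Bsg := {p | p.1.1 = p.1.2 + α}

/-- `↓(a,b)`, the down-set of an element w.r.t. the natural partial order. -/
def lowerSet (t : Bsg) : Set Bsg := {s | ple s t}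

/-- `↓°(a,b) = ↓(a,b) \ {(a,b)}`. -/
def lowerSetStrict (t : Bsg) : Set Bsg := lowerSet t \ {t}

/-- The inversion `(a,b) ↦ (b,a)`. -/
def binv (u : Bsg) : Bsg := ⟨(u.1.2, u.1.1), u.2.2, u.2.1⟩

end Bsg

/-!
The idempotents of `B_{[0,∞)}` are the diagonal pairs `(r, r)`, so `s ≼ t` means that `s` is `t`
shifted by `(r, r)` for some `r ≥ 0`. For `u = (a₀, b₀)`, `w = (a₁, b₁)` and
`c = (a₁ + b₀, b₁ + a₀)` one computes `u·c = (a₁ + a₀, b₁ + a₀) ≼ w`. Since `≼` is transitive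
and `x ≼ c` implies `u·x ≼ u·c` by associativity, every `x ≼ c` works too. The dual statement is
the first one transported along the anti-automorphism `(a, b) ↦ (b, a)`, which preserves `≼`.
-/

namespace Bsg

lemma mul_val (u v : Bsg) :
    (u * v).1 = (u.1.1 + v.1.1 - min u.1.2 v.1.1, u.1.2 + v.1.2 - min u.1.2 v.1.1) := rfl

lemma mul_self_eq_self_iff (e : Bsg) : e * e = e ↔ e.1.1 = e.1.2 := by
  rw [← Subtype.val_inj, mul_val, Prod.ext_iff]
  constructor
  · rintro ⟨h₁, h₂⟩
    dsimp only at h₁ h₂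
    linarith
  · intro h
    simp [h]

lemma ple_iff {s t : Bsg} : ple s t ↔ ∃ r, 0 ≤ r ∧ s.1 = (t.1.1 + r, t.1.2 + r) := by
  constructor
  · rintro ⟨e, he, rfl⟩
    rw [mul_self_eq_self_iff] at he
    refine ⟨e.1.1 - min t.1.2 e.1.1, sub_nonneg.2 (min_le_right _ _), ?_⟩
    rw [mul_val, he]
    ext <;> dsimp only <;> ring
  · rintro ⟨r, hr, hs⟩
    have hx : 0 ≤ t.1.2 + r := add_nonneg t.2.2 hr
    refine ⟨⟨(t.1.2 + r, t.1.2 + r), hx, hx⟩, (mul_self_eq_self_iff _).2 rfl, ?_⟩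
    rw [← Subtype.val_inj, hs, mul_val]
    dsimp only
    rw [min_eq_left (le_add_of_nonneg_right hr)]
    ext <;> dsimp only <;> ring

lemma ple_trans {s t w : Bsg} (hst : ple s t) (htw : ple t w) : ple s w := by
  obtain ⟨r, hr, hs⟩ := ple_iff.1 hst
  obtain ⟨q, hq, ht⟩ := ple_iff.1 htw
  refine ple_iff.2 ⟨q + r, add_nonneg hq hr, ?_⟩
  rw [hs, ht]
  ext <;> dsimp only <;> ring

lemma ple_mul_left (u : Bsg) {x c : Bsg} (h : ple x c) : ple (u * x) (u * c) := by
  obtain ⟨e, he, rfl⟩ := h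
  exact ⟨e, he, (mul_assoc u c e).symm⟩

lemma binv_binv (u : Bsg) : binv (binv u) = u := rfl

lemma binv_mul (u v : Bsg) : binv (u * v) = binv v * binv u := by
  rw [← Subtype.val_inj, mul_val]
  simp only [binv, mul_val, min_comm u.1.2 v.1.1, add_comm u.1.2, add_comm u.1.1]

lemma ple_binv_iff {s t : Bsg} : ple (binv s) (binv t) ↔ ple s t := by
  simp only [ple_iff, binv, Prod.ext_iff]
  exact exists_congr fun r => and_congr_right fun _ => and_comm

lemma exists_mul_ple (u w : Bsg) : ∃ c, ple (u * c) w := by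
  have hc₁ : 0 ≤ w.1.1 + u.1.2 := add_nonneg w.2.1 u.2.2
  have hc₂ : 0 ≤ w.1.2 + u.1.1 := add_nonneg w.2.2 u.2.1
  refine ⟨⟨(w.1.1 + u.1.2, w.1.2 + u.1.1), hc₁, hc₂⟩, ple_iff.2 ⟨u.1.1, u.2.1, ?_⟩⟩
  rw [mul_val]
  dsimp only
  rw [min_eq_left (le_add_of_nonneg_left w.2.1)]
  ext <;> dsimp only <;> ring

lemma exists_forall_ple_mul_ple (u w : Bsg) :
    ∃ c, ple (u * c) w ∧ ∀ x, ple x c → ple (u * x) w := by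
  obtain ⟨c, hc⟩ := exists_mul_ple u w
  exact ⟨c, hc, fun x hx => ple_trans (ple_mul_left u hx) hc⟩

end Bsg

open Bsg in
/-- for all `(a₀,b₀), (a₁,b₁)` there is `(c,d)` with
`(a₀,b₀)·(c,d) ≼ (a₁,b₁)`, and moreover `(a₀,b₀)·(x,y) ≼ (a₁,b₁)` for every
`(x,y) ≼ (c,d)`; dually on the other side. -/
theorem stmt12 (u w : Bsg) :
    (∃ c : Bsg, ple (u * c) w ∧ ∀ x : Bsg, ple x c → ple (u * x) w) ∧
    (∃ c' : Bsg, ple (c' * u) w ∧ ∀ x : Bsg, ple x c' → ple (x * u) w) := by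
  refine ⟨exists_forall_ple_mul_ple u w, ?_⟩
  obtain ⟨c, hc, hle⟩ := exists_forall_ple_mul_ple (binv u) (binv w)
  refine ⟨binv c, ?_, fun x hx => ?_⟩
  · rw [← ple_binv_iff, binv_mul, binv_binv]
    exact hc
  · rw [← ple_binv_iff, binv_mul]
    exact hle _ (by rwa [← ple_binv_iff, binv_binv] at hx)
end

section
/- Let S be a Hausdorff locally compact semitopological semigroup, let z ∈ S satisfy z·s = s·z = z for all s ∈ S, and let f : B_{[0,∞)} → S be an injective semigroup homomorphism with range S \ {z} which is a topological embedding of B^2_{[0,∞)} onto the subspace S \ {z}. Then either {z} is open in S, or the map F : OnePoint(B^2_{[0,∞)}) → S defined by F(∞) = z and F(x) = f(x) for x ∈ B_{[0,∞)} is a homeomorphism. -/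
/-- The topology `τ_L`, induced by the injection `(a,b) ↦ (b−a, min(a,b))` into `ℝ_d × ℝ`,
where the first factor carries the discrete topology. -/
def tauL : TopologicalSpace Bsg :=
  TopologicalSpace.induced (fun p : Bsg => ((p.1.2 - p.1.1, min p.1.1 p.1.2) : ℝ × ℝ))
    (@instTopologicalSpaceProd ℝ ℝ ⊥ inferInstance)

/- `B^2_{[0,∞)}`: we equip `Bsg` with the topology `τ_L`. -/
instance (priority := 2000) : TopologicalSpace Bsg := tauL

/-!
Suppose `{z}` is not open. It suffices to show that `S` is compact: the canonical map from the
one-point compactification is then a continuous bijection from a compact space onto a Hausdorff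
one. Fix a compact neighbourhood `K` of `z` and put `V = f⁻¹(int K)`. As `K \ int K` is compact
and misses `z`, its preimage `D` is compact, so it lies on finitely many rays `L_α^±` and has
bounded height. Since `z` is not isolated it is a limit of the points `f x`, hence of
`f (e x e) = f e · f x · f e` for every idempotent `e`, and `e x e` is at least as high as `e`:
so `z` is a limit of points of `V` of arbitrarily large height. A ray tail is connected, and
where it avoids `D` it meets the closed set `f⁻¹ K` only inside the open set `V`; so it lies in
`V` as soon as it meets it. Hence `z` is the limit along one ray, and right multiplication
carries this to every ray. So every ray tail avoiding `D` lies in `V`, i.e. `Vᶜ` lies in the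
compact set of points of the rays of `D` below its height, and `S = K ∪ f(Vᶜ)` is compact.
-/

open Topology Set

namespace Bsg

def gap (q : Bsg) : ℝ := q.1.2 - q.1.1

def height (q : Bsg) : ℝ := min q.1.1 q.1.2

/-- The point of `L_δ^+` (for `δ ≥ 0`) or `L_{-δ}^-` (for `δ ≤ 0`) of height `max 0 m`;
the clamp makes it defined, and continuous, for every real `m`. -/
def rayPoint (δ m : ℝ) : Bsg :=
  ⟨(max 0 m + max 0 (-δ), max 0 m + max 0 δ),
    add_nonneg (le_max_left _ _) (le_max_left _ _),
    add_nonneg (le_max_left _ _) (le_max_left _ _)⟩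

def rayTail (δ c : ℝ) : Set Bsg := {q | gap q = δ ∧ c < height q}

lemma height_nonneg (q : Bsg) : 0 ≤ height q := le_min q.2.1 q.2.2

lemma gap_rayPoint (δ m : ℝ) : gap (rayPoint δ m) = δ := by
  simp only [gap, rayPoint]
  rcases le_total 0 δ with h | h <;> simp [h]

lemma height_rayPoint (δ m : ℝ) : height (rayPoint δ m) = max 0 m := by
  simp only [height, rayPoint, min_add_add_left]
  rcases le_total 0 δ with h | h <;> simp [h]

lemma rayPoint_gap_height (q : Bsg) : rayPoint (gap q) (height q) = q := by
  obtain ⟨⟨a, b⟩, ha, hb⟩ := q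
  apply Subtype.ext
  simp only [rayPoint, gap, height, Prod.mk.injEq]
  rcases le_total a b with h | h
  · simp [ha, h]
  · simp [hb, h]

lemma rayTail_eq_image (δ c : ℝ) : rayTail δ c = rayPoint δ '' Ioi c := by
  ext q
  constructor
  · rintro ⟨rfl, hq⟩
    exact ⟨height q, hq, rayPoint_gap_height q⟩
  · rintro ⟨m, hm, rfl⟩
    exact ⟨gap_rayPoint δ m, (height_rayPoint δ m).symm ▸ hm.trans_le (le_max_right 0 m)⟩

lemma gap_mul (u v : Bsg) : gap (u * v) = gap u + gap v := by
  show (u.1.2 + v.1.2 - min u.1.2 v.1.1) - (u.1.1 + v.1.1 - min u.1.2 v.1.1) = _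
  simp only [gap]
  ring

lemma height_sub_le_height_mul (u v : Bsg) : height u - v.1.1 ≤ height (u * v) := by
  show _ ≤ min (u.1.1 + v.1.1 - min u.1.2 v.1.1) (u.1.2 + v.1.2 - min u.1.2 v.1.1)
  have := min_le_left u.1.1 u.1.2
  have := min_le_right u.1.1 u.1.2
  have := min_le_right u.1.2 v.1.1
  exact le_min (by unfold height; linarith [v.2.1]) (by unfold height; linarith [v.2.2])

lemma fst_le_fst_mul (u v : Bsg) : u.1.1 ≤ (u * v).1.1 := by
  show _ ≤ u.1.1 + v.1.1 - min u.1.2 v.1.1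
  linarith [min_le_right u.1.2 v.1.1]

lemma snd_le_snd_mul (u v : Bsg) : v.1.2 ≤ (u * v).1.2 := by
  show _ ≤ u.1.2 + v.1.2 - min u.1.2 v.1.1
  linarith [min_le_left u.1.2 v.1.1]

lemma le_height_rayPoint_mul_mul (t : ℝ) (x : Bsg) :
    t ≤ height (rayPoint 0 t * x * rayPoint 0 t) := by
  have h₁ := (fst_le_fst_mul _ x).trans (fst_le_fst_mul (rayPoint 0 t * x) (rayPoint 0 t))
  have h₂ := snd_le_snd_mul (rayPoint 0 t * x) (rayPoint 0 t)
  have hdiag : (rayPoint 0 t).1 = (max 0 t, max 0 t) := by simp [rayPoint]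
  rw [hdiag] at h₁ h₂
  exact le_min ((le_max_right 0 t).trans h₁) ((le_max_right 0 t).trans h₂)

lemma topology_eq :
    instTopologicalSpaceBsg = .induced gap ⊥ ⊓ .induced height inferInstance := by
  show tauL = _
  rw [tauL, show (@instTopologicalSpaceProd ℝ ℝ ⊥ inferInstance) =
    .induced Prod.fst ⊥ ⊓ .induced Prod.snd inferInstance from rfl,
    induced_inf, induced_compose, induced_compose]
  rfl

lemma continuous_height : Continuous height := by
  rw [continuous_iff_le_induced, topology_eq]
  exact inf_le_right

lemma isOpen_gap_preimage (s : Set ℝ) : IsOpen (gap ⁻¹' s) := by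
  rw [topology_eq]
  exact (inf_le_left : _ ≤ TopologicalSpace.induced gap ⊥) _ ⟨s, trivial, rfl⟩

lemma continuous_rayPoint (δ : ℝ) : Continuous (rayPoint δ) := by
  rw [continuous_iff_coinduced_le, topology_eq, le_inf_iff, ← continuous_iff_coinduced_le,
    ← continuous_iff_coinduced_le, continuous_induced_rng, continuous_induced_rng]
  constructor
  · simp only [Function.comp_def, gap_rayPoint]
    exact @continuous_const ℝ ℝ _ ⊥ δ
  · simp only [Function.comp_def, height_rayPoint]
    exact continuous_const.max continuous_id

lemma isPreconnected_rayTail (δ c : ℝ) : IsPreconnected (rayTail δ c) := by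
  rw [rayTail_eq_image]
  exact isPreconnected_Ioi.image _ (continuous_rayPoint δ).continuousOn

lemma exists_height_le_of_isCompact {K : Set Bsg} (hK : IsCompact K) :
    ∃ M, ∀ q ∈ K, height q ≤ M := by
  obtain ⟨M, hM⟩ := (hK.image continuous_height).bddAbove
  exact ⟨M, fun q hq => hM ⟨q, hq, rfl⟩⟩

lemma finite_gap_image_of_isCompact {K : Set Bsg} (hK : IsCompact K) : (gap '' K).Finite := by
  obtain ⟨t, ht⟩ := hK.elim_finite_subcover (fun δ : ℝ => gap ⁻¹' {δ})
    (fun δ => isOpen_gap_preimage {δ}) (fun q _ => mem_iUnion.2 ⟨gap q, rfl⟩)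
  refine t.finite_toSet.subset ?_
  rintro _ ⟨q, hq, rfl⟩
  obtain ⟨δ, hδ, hqδ⟩ := mem_iUnion₂.1 (ht hq)
  exact (mem_singleton_iff.1 hqδ).symm ▸ hδ

lemma isCompact_setOf_gap_mem_height_le {A : Set ℝ} (hA : A.Finite) (M : ℝ) :
    IsCompact {q : Bsg | gap q ∈ A ∧ height q ≤ M} := by
  have : {q : Bsg | gap q ∈ A ∧ height q ≤ M} = ⋃ δ ∈ A, rayPoint δ '' Icc 0 M := by
    ext q
    simp only [mem_ofPred_eq, mem_iUnion, mem_image, mem_Icc]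
    constructor
    · rintro ⟨hq, hM⟩
      exact ⟨gap q, hq, height q, ⟨height_nonneg q, hM⟩, rayPoint_gap_height q⟩
    · rintro ⟨δ, hδ, m, ⟨h0, hM⟩, rfl⟩
      rw [gap_rayPoint, height_rayPoint, max_eq_right h0]
      exact ⟨hδ, hM⟩
  rw [this]
  exact hA.isCompact_biUnion fun δ _ => isCompact_Icc.image (continuous_rayPoint δ)

lemma image_mul_rayTail_subset (u : Bsg) (δ c : ℝ) :
    (· * u) '' rayTail δ (c + u.1.1) ⊆ rayTail (δ + gap u) c := by
  rintro _ ⟨q, ⟨hq, hc⟩, rfl⟩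
  exact ⟨by rw [gap_mul, hq], by linarith [height_sub_le_height_mul q u]⟩

end Bsg

lemma Topology.IsEmbedding.isCompact_preimage_diff_of_range_eq {X S : Type*} [TopologicalSpace X]
    [TopologicalSpace S] {f : X → S} {z : S} (hf : IsEmbedding f) (hrange : range f = {z}ᶜ)
    {K U : Set S} (hK : IsCompact K) (hU : IsOpen U) (hzU : z ∈ U) :
    IsCompact (f ⁻¹' (K \ U)) :=
  hf.isInducing.isCompact_preimage' (hK.diff hU) fun _ hs => hrange ▸ fun h => hs.2 (h ▸ hzU)

namespace Bsg

variable {S : Type*} [TopologicalSpace S] {z : S} {f : Bsg → S}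

lemma mem_closure_image_lt_height [Semigroup S]
    (hsep : ∀ a : S, Continuous (fun x : S => a * x) ∧ Continuous (fun x : S => x * a))
    (hz : ∀ s : S, z * s = z ∧ s * z = z) (hhom : ∀ u v : Bsg, f (u * v) = f u * f v)
    (hrange : range f = {z}ᶜ) (hz_open : ¬IsOpen {z}) (c : ℝ) :
    z ∈ closure (f '' {q | c < height q}) := by
  have hz_closure : z ∈ closure (f '' univ) := by
    rw [image_univ, hrange, closure_compl, mem_compl_iff, mem_interior_iff_mem_nhds]
    exact fun h => hz_open (isOpen_iff_mem_nhds.2 fun x hx => (mem_singleton_iff.1 hx) ▸ h)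
  set e := rayPoint 0 (c + 1)
  have := map_mem_closure ((hsep (f e)).2.comp (hsep (f e)).1) hz_closure
    (t := f '' {q | c < height q}) ?_
  · simpa only [Function.comp_apply, (hz _).1, (hz _).2] using this
  rintro _ ⟨x, -, rfl⟩
  refine ⟨e * x * e, (lt_add_one c).trans_le (le_height_rayPoint_mul_mul _ x), ?_⟩
  simp only [Function.comp_apply, hhom]

lemma rayTail_subset_preimage_interior [T2Space S] (hf : Continuous f) {K : Set S}
    (hK : IsCompact K) {δ c : ℝ} (hne : (rayTail δ c ∩ f ⁻¹' interior K).Nonempty)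
    (hD : ∀ p ∈ rayTail δ c, f p ∉ K \ interior K) : rayTail δ c ⊆ f ⁻¹' interior K := by
  refine (isPreconnected_rayTail δ c).subset_of_closure_inter_subset
    (isOpen_interior.preimage hf) hne fun p ⟨hpV, hp⟩ => ?_
  have hpK : f p ∈ K :=
    closure_minimal (preimage_mono interior_subset) (hK.isClosed.preimage hf) hpV
  by_contra hpV'
  exact hD p hp ⟨hpK, hpV'⟩

lemma exists_rayTail_subset_preimage_interior [T2Space S] [Semigroup S]
    (hsep : ∀ a : S, Continuous (fun x : S => a * x) ∧ Continuous (fun x : S => x * a))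
    (hz : ∀ s : S, z * s = z ∧ s * z = z) (hhom : ∀ u v : Bsg, f (u * v) = f u * f v)
    (hrange : range f = {z}ᶜ) (hemb : IsEmbedding f) (hz_open : ¬IsOpen {z})
    {K : Set S} (hK : IsCompact K) (hzK : z ∈ interior K) :
    ∃ δ c, rayTail δ c ⊆ f ⁻¹' interior K := by
  obtain ⟨M, hM⟩ := exists_height_le_of_isCompact
    (hemb.isCompact_preimage_diff_of_range_eq hrange hK isOpen_interior hzK)
  obtain ⟨_, hqK, q, hq, rfl⟩ := mem_closure_iff_nhds.1
    (mem_closure_image_lt_height hsep hz hhom hrange hz_open M) _ (isOpen_interior.mem_nhds hzK)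
  exact ⟨gap q, M, rayTail_subset_preimage_interior hemb.continuous hK ⟨q, ⟨rfl, hq⟩, hqK⟩
    fun p hp hpD => (hM p hpD).not_gt hp.2⟩

lemma mem_closure_image_rayTail_of_subset (hrange : range f = {z}ᶜ) (hemb : IsEmbedding f)
    {K : Set S} (hK : IsCompact K) {δ c₀ : ℝ} (hsub : rayTail δ c₀ ⊆ f ⁻¹' K) (c : ℝ) :
    z ∈ closure (f '' rayTail δ c) := by
  refine mem_closure_iff_nhds.2 fun W hW => ?_
  obtain ⟨M, hM⟩ := exists_height_le_of_isCompact (hemb.isCompact_preimage_diff_of_range_eq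
    hrange hK isOpen_interior (mem_interior_iff_mem_nhds.2 hW))
  set b := max (max c₀ c) M
  set p := rayPoint δ (b + 1)
  have hb : b < height p := by
    rw [height_rayPoint]
    exact (lt_add_one b).trans_le (le_max_right _ _)
  have hpW : f p ∈ interior W := by
    by_contra h
    refine (hM p ⟨hsub ⟨gap_rayPoint δ _, ?_⟩, h⟩).not_gt ((le_max_right _ _).trans_lt hb)
    exact ((le_max_left _ _).trans (le_max_left _ _)).trans_lt hb
  exact ⟨f p, interior_subset hpW, p,
    ⟨gap_rayPoint δ _, ((le_max_right _ _).trans (le_max_left _ _)).trans_lt hb⟩, rfl⟩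

lemma mem_closure_image_rayTail [Semigroup S]
    (hsep : ∀ a : S, Continuous (fun x : S => a * x) ∧ Continuous (fun x : S => x * a))
    (hz : ∀ s : S, z * s = z ∧ s * z = z) (hhom : ∀ u v : Bsg, f (u * v) = f u * f v)
    {δ₀ : ℝ} (h₀ : ∀ c, z ∈ closure (f '' rayTail δ₀ c)) (δ c : ℝ) :
    z ∈ closure (f '' rayTail δ c) := by
  set u := rayPoint (δ - δ₀) 0
  have := map_mem_closure (hsep (f u)).2 (h₀ (c + u.1.1)) (t := f '' rayTail δ c) ?_
  · rwa [(hz _).1] at this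
  rintro _ ⟨q, hq, rfl⟩
  have hqu := image_mul_rayTail_subset u δ₀ c ⟨q, hq, rfl⟩
  rw [gap_rayPoint, add_sub_cancel] at hqu
  exact ⟨q * u, hqu, hhom q u⟩

lemma isCompact_compl_preimage_interior [T2Space S] [Semigroup S]
    (hsep : ∀ a : S, Continuous (fun x : S => a * x) ∧ Continuous (fun x : S => x * a))
    (hz : ∀ s : S, z * s = z ∧ s * z = z) (hhom : ∀ u v : Bsg, f (u * v) = f u * f v)
    (hrange : range f = {z}ᶜ) (hemb : IsEmbedding f) (hz_open : ¬IsOpen {z})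
    {K : Set S} (hK : IsCompact K) (hzK : z ∈ interior K) :
    IsCompact (f ⁻¹' interior K)ᶜ := by
  have hD := hemb.isCompact_preimage_diff_of_range_eq hrange hK isOpen_interior hzK
  obtain ⟨M, hM⟩ := exists_height_le_of_isCompact hD
  have hfar : ∀ δ c, z ∈ closure (f '' rayTail δ c) := by
    obtain ⟨δ₀, c₀, h₀⟩ :=
      exists_rayTail_subset_preimage_interior hsep hz hhom hrange hemb hz_open hK hzK
    exact mem_closure_image_rayTail hsep hz hhom
      (mem_closure_image_rayTail_of_subset hrange hemb hK
        (h₀.trans (preimage_mono interior_subset)))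
  refine (isCompact_setOf_gap_mem_height_le (finite_gap_image_of_isCompact hD) M).of_isClosed_subset
    (isOpen_interior.preimage hemb.continuous).isClosed_compl fun q hqV => ?_
  by_contra hq
  simp only [mem_ofPred_eq, not_and, not_le] at hq
  obtain ⟨c, hcq, hcD⟩ : ∃ c < height q, ∀ p ∈ rayTail (gap q) c, f p ∉ K \ interior K := by
    by_cases hA : gap q ∈ gap '' (f ⁻¹' (K \ interior K))
    · exact ⟨M, hq hA, fun p hp hpD => (hM p hpD).not_gt hp.2⟩
    · exact ⟨-1, by linarith [height_nonneg q], fun p hp hpD => hA ⟨p, hpD, hp.1⟩⟩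
  obtain ⟨_, hpV, p, hp, rfl⟩ :=
    mem_closure_iff_nhds.1 (hfar (gap q) c) _ (isOpen_interior.mem_nhds hzK)
  exact hqV (rayTail_subset_preimage_interior hemb.continuous hK ⟨p, hp, hpV⟩ hcD ⟨rfl, hcq⟩)

lemma compactSpace_of_not_isOpen_singleton [T2Space S] [LocallyCompactSpace S] [Semigroup S]
    (hsep : ∀ a : S, Continuous (fun x : S => a * x) ∧ Continuous (fun x : S => x * a))
    (hz : ∀ s : S, z * s = z ∧ s * z = z) (hhom : ∀ u v : Bsg, f (u * v) = f u * f v)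
    (hrange : range f = {z}ᶜ) (hemb : IsEmbedding f) (hz_open : ¬IsOpen {z}) :
    CompactSpace S := by
  obtain ⟨K, hK, hKz⟩ := exists_compact_mem_nhds z
  have hzK := mem_interior_iff_mem_nhds.2 hKz
  have hcover : univ ⊆ K ∪ f '' (f ⁻¹' interior K)ᶜ := by
    intro s _
    by_cases hs : s ∈ K
    · exact Or.inl hs
    obtain ⟨q, rfl⟩ : s ∈ range f := hrange ▸ fun h => hs (h ▸ interior_subset hzK)
    exact Or.inr ⟨q, fun hq => hs (interior_subset hq), rfl⟩
  have hVc := isCompact_compl_preimage_interior hsep hz hhom hrange hemb hz_open hK hzK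
  exact ⟨(hK.union (hVc.image hemb.continuous)).of_isClosed_subset isClosed_univ hcover⟩

end Bsg

theorem stmt15_general {S : Type*} [TopologicalSpace S] [T2Space S] [LocallyCompactSpace S] [Semigroup S]
    (hsep : ∀ a : S, Continuous (fun x : S => a * x) ∧ Continuous (fun x : S => x * a))
    (z : S) (hz : ∀ s : S, z * s = z ∧ s * z = z)
    (f : Bsg → S)
    (hhom : ∀ u v : Bsg, f (u * v) = f u * f v)
    (hrange : Set.range f = ({z}ᶜ : Set S))
    (hemb : Topology.IsEmbedding f) :
    IsOpen ({z} : Set S) ∨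
      IsHomeomorph (fun u : OnePoint Bsg => Option.elim u z f) := by
  refine or_iff_not_imp_left.2 fun hz_open => ?_
  have := Bsg.compactSpace_of_not_isOpen_singleton hsep hz hhom hrange hemb hz_open
  exact (OnePoint.equivOfIsEmbeddingOfRangeEq z f hemb hrange).isHomeomorph

/-- if `S` is a Hausdorff locally compact semitopological semigroup which is
`B^2_{[0,∞)}` with an adjoined zero `z`, then either `{z}` is open or `S` is the one-point
compactification of `B^2_{[0,∞)}` (via the canonical map). -/
theorem stmt15 {S : Type*} [TopologicalSpace S] [T2Space S] [LocallyCompactSpace S] [Semigroup S]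
    (hsep : ∀ a : S, Continuous (fun x : S => a * x) ∧ Continuous (fun x : S => x * a))
    (z : S) (hz : ∀ s : S, z * s = z ∧ s * z = z)
    (f : Bsg → S) (hinj : Function.Injective f)
    (hhom : ∀ u v : Bsg, f (u * v) = f u * f v)
    (hrange : Set.range f = ({z}ᶜ : Set S))
    (hemb : Topology.IsEmbedding f) :
    IsOpen ({z} : Set S) ∨
      IsHomeomorph (fun u : OnePoint Bsg => Option.elim u z f) :=
  stmt15_general hsep z hz f hhom hrange hemb
end

section
/- Let S be a Hausdorff locally compact semitopological semigroup, let z ∈ S satisfy z·s = s·z = z for all s ∈ S, and let f : B_{[0,∞)} → S be an injective semigroup homomorphism with range S \ {z} such that every point of S \ {z} is isolated in S. Then for every compact open set U ⊆ S with z ∈ U and every (a,b) ∈ B_{[0,∞)}, the set {(x,y) ∈ B_{[0,∞)} : (a,b) ≼ (x,y) and f(x,y) ∈ U} is finite. -/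
namespace Bsg

@[simp] lemma mul_fst (u v : Bsg) : (u * v).1.1 = u.1.1 + v.1.1 - min u.1.2 v.1.1 := rfl

@[simp] lemma mul_snd (u v : Bsg) : (u * v).1.2 = u.1.2 + v.1.2 - min u.1.2 v.1.1 := rfl

lemma fst_eq_snd_of_mul_self {e : Bsg} (he : e * e = e) : e.1.1 = e.1.2 := by
  have h₁ := congrArg (·.1.1) he
  have h₂ := congrArg (·.1.2) he
  simp only [mul_fst, mul_snd] at h₁ h₂
  linarith

lemma mk_zero_mul_of_ple {v p : Bsg} (h : ple v p) :
    (⟨(0, v.1.1), le_rfl, v.2.1⟩ : Bsg) * p = ⟨(0, v.1.2), le_rfl, v.2.2⟩ := by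
  obtain ⟨e, he, rfl⟩ := h
  have hc := fst_eq_snd_of_mul_self he
  have hm := min_le_right p.1.2 e.1.1
  have hle : p.1.1 ≤ p.1.1 + e.1.1 - min p.1.2 e.1.1 := by linarith
  apply Subtype.ext
  refine Prod.ext ?_ ?_ <;> simp only [mul_fst, mul_snd, min_eq_right hle] <;> linarith

end Bsg

lemma AccPt.not_isOpen_singleton {X : Type*} [TopologicalSpace X] {x : X} {F : Filter X}
    (h : AccPt x F) : ¬IsOpen ({x} : Set X) := by
  rw [isOpen_singleton_iff_punctured_nhds]
  intro hx
  exact h.ne (by rw [hx, bot_inf_eq])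

open Bsg in
theorem stmt17_general {S : Type*} [TopologicalSpace S] [T2Space S] [Semigroup S]
    (hsep : ∀ a : S, Continuous (fun x : S => a * x) ∧ Continuous (fun x : S => x * a))
    (z : S) (hz : ∀ s : S, z * s = z ∧ s * z = z)
    (f : Bsg → S) (hinj : Function.Injective f)
    (hhom : ∀ u v : Bsg, f (u * v) = f u * f v)
    (hrange : Set.range f = ({z}ᶜ : Set S))
    (hiso : ∀ s : S, s ≠ z → IsOpen ({s} : Set S))
    (U : Set S) (hUcomp : IsCompact U) (v : Bsg) :
    {p : Bsg | ple v p ∧ f p ∈ U}.Finite := by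
  by_contra hinf
  set T := {p : Bsg | ple v p ∧ f p ∈ U}
  set w : Bsg := ⟨(0, v.1.1), le_rfl, v.2.1⟩
  set q : Bsg := ⟨(0, v.1.2), le_rfl, v.2.2⟩
  obtain ⟨x, -, hacc⟩ := (Set.Infinite.image hinj.injOn hinf).exists_accPt_of_subset_isCompact
    hUcomp (Set.image_subset_iff.mpr fun p hp => hp.2)
  obtain rfl : z = x := by_contra fun hzx => hacc.not_isOpen_singleton (hiso x (Ne.symm hzx))
  have hcollapse : Set.EqOn (f w * ·) (fun _ => f q) (f '' T) := by
    rintro _ ⟨p, hp, rfl⟩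
    exact (hhom w p).symm.trans (congrArg f (mk_zero_mul_of_ple hp.1))
  have hzq : z = f q := by
    rw [← (hz (f w)).2]
    exact hcollapse.closure (hsep (f w)).1 continuous_const
      (mem_closure_iff_clusterPt.mpr hacc.clusterPt)
  exact (hrange ▸ Set.mem_range_self q : f q ∈ ({z}ᶜ : Set S)) hzq.symm

open Bsg in
/-- if every point of `S \ {z}` is isolated, then for every compact open
`U ∋ z` and every `(a,b)` the set `↑(a,b) ∩ f⁻¹(U)` is finite. -/
theorem stmt17 {S : Type*} [TopologicalSpace S] [T2Space S] [LocallyCompactSpace S] [Semigroup S]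
    (hsep : ∀ a : S, Continuous (fun x : S => a * x) ∧ Continuous (fun x : S => x * a))
    (z : S) (hz : ∀ s : S, z * s = z ∧ s * z = z)
    (f : Bsg → S) (hinj : Function.Injective f)
    (hhom : ∀ u v : Bsg, f (u * v) = f u * f v)
    (hrange : Set.range f = ({z}ᶜ : Set S))
    (hiso : ∀ s : S, s ≠ z → IsOpen ({s} : Set S))
    (U : Set S) (hUcomp : IsCompact U) (hUopen : IsOpen U) (hzU : z ∈ U) (v : Bsg) :
    {p : Bsg | ple v p ∧ f p ∈ U}.Finite :=
  stmt17_general hsep z hz f hinj hhom hrange hiso U hUcomp v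
end
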